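/- arXiv:1210.0260 — 6 statements merged into one kernel-verified Lean document; each statement's English description precedes it below -/
import Mathlib

section
/- Let D=(V,A) be a digraph, r ∈ V, T ⊆ V∖{r} a set of terminals, and C ⊆ T a nonempty set of terminals such that any two vertices of C are mutually reachable by directed paths all of whose vertices lie in C. Then for every set S ⊆ V∖(T∪{r}), the subdigraph of D induced by S∪T∪{r} contains a directed path from r to every terminal t ∈ T if and only if it contains a directed path from r to every terminal t ∈ T∖C and a directed path from r to at least one vertex of C. (This is the correctness of Reduction Rule 1, which contracts a strongly connected component of the terminal-induced subdigraph, stated without the contraction.) -/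
/-- Reachability by a directed path all of whose vertices lie in `X`,
    via the reflexive-transitive closure of the arc relation restricted to `X`. -/
def reachIn {V : Type*} (A : V → V → Prop) (X : Set V) (u v : V) : Prop :=
  Relation.ReflTransGen (fun a b => a ∈ X ∧ b ∈ X ∧ A a b) u v

lemma reachIn_mono {V : Type*} {A : V → V → Prop} {X Y : Set V} (h : X ⊆ Y)
    {u v : V} (hr : reachIn A X u v) : reachIn A Y u v := by
  induction hr with
  | refl => exact Relation.ReflTransGen.refl
  | tail _ hbc ih => exact ih.tail ⟨h hbc.1, h hbc.2.1, hbc.2.2⟩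

theorem stmt_0 {V : Type*} (A : V → V → Prop) (r : V) (T C : Set V)
    (hT : r ∉ T) (hCT : C ⊆ T) (hCne : C.Nonempty)
    (hSC : ∀ x ∈ C, ∀ y ∈ C, reachIn A C x y) :
    ∀ S : Set V, S ⊆ (T ∪ {r})ᶜ →
      ((∀ t ∈ T, reachIn A (S ∪ T ∪ {r}) r t) ↔
        ((∀ t ∈ T \ C, reachIn A (S ∪ T ∪ {r}) r t) ∧
          ∃ c ∈ C, reachIn A (S ∪ T ∪ {r}) r c)) := by
  intro S _hS
  constructor
  · intro h
    obtain ⟨c, hc⟩ := hCne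
    exact ⟨fun t ht => h t ht.1, c, hc, h c (hCT hc)⟩
  · rintro ⟨h1, c, hc, hrc⟩ t ht
    by_cases htC : t ∈ C
    · exact hrc.trans (reachIn_mono
        (fun x hx => Or.inl (Or.inr (hCT hx))) (hSC c hc t htC))
    · exact h1 t ⟨ht, htC⟩
end

section
/- Let D=(V,A) be a digraph, r ∈ V, T ⊆ V∖{r} a set of terminals, k ≥ 1 an integer, and x ∈ V∖(T∪{r}). For every set S ⊆ V∖(T∪{r,x}): S is a solution of size at most k−1 for the instance (D,r,T∪{x}) if and only if S∪{x} is a solution of size at most k for the instance (D,r,T) and x is reachable from r by a directed path in the subdigraph of D induced by T∪S∪{r,x}. Consequently, if S∪{x} is a solution of minimum size for (D,r,T), then S is a solution of minimum size for (D,r,T∪{x}). -/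
/-- `S` is a solution for the Directed Steiner Tree instance `(D, r, T)`:
    `S ⊆ V ∖ (T ∪ {r})` and in the subdigraph induced by `S ∪ T ∪ {r}` there is a
    directed path from `r` to every terminal. -/
def isSolution {V : Type*} (A : V → V → Prop) (r : V) (T S : Set V) : Prop :=
  S ⊆ (T ∪ {r})ᶜ ∧ ∀ t ∈ T, reachIn A (S ∪ T ∪ {r}) r t

lemma reachIn_avoid {V : Type*} {A : V → V → Prop} {X : Set V} {x u v : V}
    (h : reachIn A X u v) (hx : ¬ reachIn A X u x) :
    reachIn A (X \ {x}) u v := by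
  induction h with
  | refl => exact Relation.ReflTransGen.refl
  | @tail b c h step ih =>
    obtain ⟨hb, hc, hA⟩ := step
    have hcx : c ≠ x := fun e => hx (e ▸ (h.tail ⟨hb, hc, hA⟩))
    have hbx : b ≠ x := fun e => hx (e ▸ h)
    exact ih.tail ⟨⟨hb, hbx⟩, ⟨hc, hcx⟩, hA⟩

theorem stmt_3 {V : Type*} (A : V → V → Prop) (r : V) (T : Set V) (hT : r ∉ T)
    (k : ℕ) (hk : 1 ≤ k) (x : V) (hx : x ∉ T ∪ {r}) :
    (∀ S : Set V, S.Finite → S ⊆ (T ∪ {r, x})ᶜ →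
      ((isSolution A r (T ∪ {x}) S ∧ S.ncard ≤ k - 1) ↔
        (isSolution A r T (S ∪ {x}) ∧ (S ∪ {x}).ncard ≤ k ∧
          reachIn A (T ∪ S ∪ {r, x}) r x)))
    ∧
    (∀ S : Set V, S.Finite → S ⊆ (T ∪ {r, x})ᶜ →
      (isSolution A r T (S ∪ {x}) ∧
        (∀ S' : Set V, S'.Finite → isSolution A r T S' → (S ∪ {x}).ncard ≤ S'.ncard)) →
      (isSolution A r (T ∪ {x}) S ∧
        (∀ S' : Set V, S'.Finite → isSolution A r (T ∪ {x}) S' → S.ncard ≤ S'.ncard))) := by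
  have hxT : x ∉ T := fun h => hx (Or.inl h)
  have hxr : x ≠ r := fun h => hx (Or.inr h)
  constructor
  · intro S hS hSsub
    have hxS : x ∉ S := fun h => hSsub h (Or.inr (Or.inr rfl))
    have hE1 : S ∪ (T ∪ {x}) ∪ {r} = T ∪ S ∪ {r, x} := by
      ext a; simp [Set.mem_union, Set.mem_insert_iff]; tauto
    have hE2 : (S ∪ {x}) ∪ T ∪ {r} = T ∪ S ∪ {r, x} := by
      ext a; simp [Set.mem_union, Set.mem_insert_iff]; tauto
    have hcard : (S ∪ {x}).ncard = S.ncard + 1 := by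
      rw [Set.union_singleton, Set.ncard_insert_of_notMem hxS hS]
    constructor
    · rintro ⟨⟨hsub, hreach⟩, hle⟩
      refine ⟨⟨?_, ?_⟩, ?_, ?_⟩
      · rintro a (ha | ha)
        · intro hmem
          rcases hmem with h | h
          · exact hSsub ha (Or.inl h)
          · exact hSsub ha (Or.inr (Or.inl h))
        · simp only [Set.mem_singleton_iff] at ha; subst ha
          exact hx
      · intro t ht
        have h := hreach t (Or.inl ht)
        rw [hE1] at h; rw [hE2]; exact h
      · omega
      · have h := hreach x (Or.inr rfl)
        rw [hE1] at h; exact h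
    · rintro ⟨⟨hsub, hreach⟩, hle, hreachx⟩
      refine ⟨⟨?_, ?_⟩, ?_⟩
      · intro a ha hmem
        have h := hSsub ha
        simp only [Set.mem_compl_iff, Set.mem_union, Set.mem_insert_iff,
          Set.mem_singleton_iff] at h hmem
        tauto
      · rintro t (ht | ht)
        · have h := hreach t ht
          rw [hE2] at h; rw [hE1]; exact h
        · simp only [Set.mem_singleton_iff] at ht; subst ht
          rw [hE1]; exact hreachx
      · omega
  · rintro S hS hSsub ⟨⟨hsub, hreach⟩, hmin⟩
    have hxS : x ∉ S := fun h => hSsub h (Or.inr (Or.inr rfl))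
    have hE1 : S ∪ (T ∪ {x}) ∪ {r} = T ∪ S ∪ {r, x} := by
      ext a; simp [Set.mem_union, Set.mem_insert_iff]; tauto
    have hE2 : (S ∪ {x}) ∪ T ∪ {r} = T ∪ S ∪ {r, x} := by
      ext a; simp [Set.mem_union, Set.mem_insert_iff]; tauto
    have hE3 : (T ∪ S ∪ {r, x}) \ {x} = S ∪ T ∪ {r} := by
      ext a
      simp only [Set.mem_diff, Set.mem_union, Set.mem_singleton_iff, Set.mem_insert_iff]
      constructor
      · rintro ⟨(h | h) | h | h, hne⟩ <;> tauto
      · rintro ((h | h) | h)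
        · exact ⟨Or.inl (Or.inr h), fun e => hxS (e ▸ h)⟩
        · exact ⟨Or.inl (Or.inl h), fun e => hxT (e ▸ h)⟩
        · exact ⟨Or.inr (Or.inl h), fun e => hxr (by rw [e] at h; exact h)⟩
    have hcard : (S ∪ {x}).ncard = S.ncard + 1 := by
      rw [Set.union_singleton, Set.ncard_insert_of_notMem hxS hS]
    -- x is reachable
    have hreachx : reachIn A (T ∪ S ∪ {r, x}) r x := by
      by_contra hnx
      have hSsol : isSolution A r T S := by
        refine ⟨?_, ?_⟩
        · intro a ha hmem
          rcases hmem with h | h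
          · exact hSsub ha (Or.inl h)
          · exact hSsub ha (Or.inr (Or.inl h))
        · intro t ht
          have h := hreach t ht
          rw [hE2] at h
          have h2 := reachIn_avoid h hnx
          rw [hE3] at h2
          exact h2
      have := hmin S hS hSsol
      omega
    refine ⟨⟨?_, ?_⟩, ?_⟩
    · intro a ha hmem
      have h := hSsub ha
      simp only [Set.mem_compl_iff, Set.mem_union, Set.mem_insert_iff,
        Set.mem_singleton_iff] at h hmem
      tauto
    · rintro t (ht | ht)
      · have h := hreach t ht
        rw [hE2] at h; rw [hE1]; exact h
      · simp only [Set.mem_singleton_iff] at ht; subst ht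
        rw [hE1]; exact hreachx
    · rintro S' hS' ⟨hsub', hreach'⟩
      have hxS' : x ∉ S' := fun h => hsub' h (Or.inl (Or.inr rfl))
      have hE1' : S' ∪ (T ∪ {x}) ∪ {r} = (S' ∪ {x}) ∪ T ∪ {r} := by
        ext a; simp [Set.mem_union, Set.mem_insert_iff]; tauto
      have hsol' : isSolution A r T (S' ∪ {x}) := by
        refine ⟨?_, ?_⟩
        · rintro a (ha | ha)
          · intro hmem
            rcases hmem with h | h
            · exact hsub' ha (Or.inl (Or.inl h))
            · exact hsub' ha (Or.inr h)
          · simp only [Set.mem_singleton_iff] at ha; subst ha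
            exact hx
        · intro t ht
          have h := hreach' t (Or.inl ht)
          rw [hE1'] at h; exact h
      have hle := hmin (S' ∪ {x}) (hS'.union (Set.finite_singleton x)) hsol'
      have hcard' : (S' ∪ {x}).ncard = S'.ncard + 1 := by
        rw [Set.union_singleton, Set.ncard_insert_of_notMem hxS' hS']
      omega
end

section
/- Let D=(V,A) be a finite digraph, r ∈ V, T ⊆ V∖{r} a set of terminals, k and d_b natural numbers, and Y ⊆ V∖(T∪{r}) with |Y| ≤ k. Let T₀ be the set of source terminals, T₁ ⊆ T₀ the set of source terminals having an in-neighbor in Y, B_h the set of vertices of V∖(T∪{r}∪Y) having at least d_b+1 out-neighbors in T₀∖T₁, and W_l the set of vertices of T₀∖T₁ that have no in-neighbor in B_h and are not out-neighbors of r. If |W_l| > d_b·(k−|Y|), then there is no solution S for the instance (D,r,T) with Y ⊆ S and |S| ≤ k. -/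
theorem Set.ncard_le_mul_ncard_of_forall_exists_rel {α β : Type*} (R : α → β → Prop)
    {P : Set α} {W : Set β} (hP : P.Finite) (hW : W.Finite) {d : ℕ}
    (hcover : ∀ t ∈ W, ∃ u ∈ P, R u t) (hdeg : ∀ u ∈ P, {t ∈ W | R u t}.ncard ≤ d) :
    W.ncard ≤ d * P.ncard := by
  classical
  have key := Finset.card_mul_le_card_mul (s := hW.toFinset) (t := hP.toFinset) (m := 1)
    (n := d) (fun t u => R u t)
    (fun t ht => Finset.card_pos.2 <| by
      obtain ⟨u, hu, htu⟩ := hcover t (hW.mem_toFinset.1 ht)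
      exact ⟨u, (Finset.mem_bipartiteAbove _).2 ⟨hP.mem_toFinset.2 hu, htu⟩⟩)
    (fun u hu => by
      rw [← Set.ncard_coe_finset, Finset.coe_bipartiteBelow]
      simp only [Set.Finite.mem_toFinset]
      exact hdeg u (hP.mem_toFinset.1 hu))
  rw [Set.ncard_eq_toFinset_card W hW, Set.ncard_eq_toFinset_card P hP, mul_comm d]
  simpa using key

theorem reachIn.exists_adj_of_ne {V : Type*} {A : V → V → Prop} {X : Set V} {u v : V}
    (h : reachIn A X u v) (hne : v ≠ u) : ∃ w ∈ X, A w v := by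
  obtain rfl | ⟨w, -, hwX, -, hwv⟩ := h.cases_tail
  · exact absurd rfl hne
  · exact ⟨w, hwX, hwv⟩

theorem stmt_4_general {V : Type*} [Fintype V] (A : V → V → Prop) (r : V) (T : Set V)
    (hT : r ∉ T) (k d_b : ℕ) (Y : Set V) :
    -- set of source terminals
    let T₀ : Set V := {t ∈ T | ∀ u ∈ T, ¬ A u t}
    -- source terminals having an in-neighbor in Y
    let T₁ : Set V := {t ∈ T₀ | ∃ y ∈ Y, A y t}
    -- non-terminals outside Y ∪ {r} with at least d_b + 1 out-neighbors in T₀ ∖ T₁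
    let Bh : Set V := {v | v ∉ T ∧ v ≠ r ∧ v ∉ Y ∧ d_b + 1 ≤ {t ∈ T₀ \ T₁ | A v t}.ncard}
    -- vertices of T₀ ∖ T₁ with no in-neighbor in Bh that are not out-neighbors of r
    let Wl : Set V := {t ∈ T₀ \ T₁ | (∀ b ∈ Bh, ¬ A b t) ∧ ¬ A r t}
    Wl.ncard > d_b * (k - Y.ncard) →
      ¬ ∃ S : Set V, Y ⊆ S ∧ S ⊆ (T ∪ {r})ᶜ ∧ S.ncard ≤ k ∧
          ∀ t ∈ T, reachIn A (S ∪ T ∪ {r}) r t := by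
  intro T₀ T₁ Bh Wl hWl
  rintro ⟨S, hYS, hSc, hSk, hreach⟩
  have hcover : ∀ t ∈ Wl, ∃ u ∈ S \ Y, A u t := by
    rintro t ⟨⟨⟨htT, hsrc⟩, hT₁⟩, -, hrt⟩
    obtain ⟨u, (huS | huT) | rfl, hut⟩ :=
      (hreach t htT).exists_adj_of_ne (ne_of_mem_of_not_mem htT hT)
    · exact ⟨u, ⟨huS, fun huY => hT₁ ⟨⟨htT, hsrc⟩, u, huY, hut⟩⟩, hut⟩
    · exact absurd hut (hsrc u huT)
    · exact absurd hut hrt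
  have hdeg : ∀ u ∈ S \ Y, {t ∈ Wl | A u t}.ncard ≤ d_b := by
    rintro u ⟨huS, huY⟩
    obtain hempty | ⟨t, htW, hut⟩ := {t ∈ Wl | A u t}.eq_empty_or_nonempty
    · simp [hempty]
    have huBh : u ∉ Bh := fun hu => htW.2.1 u hu hut
    have huTr : u ≠ r ∧ u ∉ T := by simpa [not_or] using hSc huS
    calc {t ∈ Wl | A u t}.ncard ≤ {t ∈ T₀ \ T₁ | A u t}.ncard :=
          Set.ncard_le_ncard fun t ht => ⟨ht.1.1, ht.2⟩
      _ ≤ d_b := by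
          by_contra! h
          exact huBh ⟨huTr.2, huTr.1, huY, h⟩
  have hWl_le := Set.ncard_le_mul_ncard_of_forall_exists_rel A (Set.toFinite _)
    (Set.toFinite _) hcover hdeg
  rw [Set.ncard_sdiff hYS] at hWl_le
  exact absurd (hWl_le.trans (Nat.mul_le_mul_left _ (Nat.sub_le_sub_right hSk _))) hWl.not_ge

theorem stmt_4 {V : Type*} [Fintype V] (A : V → V → Prop) (r : V) (T : Set V)
    (hT : r ∉ T) (k d_b : ℕ) (Y : Set V) (hY : Y ⊆ (T ∪ {r})ᶜ) (hYk : Y.ncard ≤ k) :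
    -- set of source terminals
    let T₀ : Set V := {t ∈ T | ∀ u ∈ T, ¬ A u t}
    -- source terminals having an in-neighbor in Y
    let T₁ : Set V := {t ∈ T₀ | ∃ y ∈ Y, A y t}
    -- non-terminals outside Y ∪ {r} with at least d_b + 1 out-neighbors in T₀ ∖ T₁
    let Bh : Set V := {v | v ∉ T ∧ v ≠ r ∧ v ∉ Y ∧ d_b + 1 ≤ {t ∈ T₀ \ T₁ | A v t}.ncard}
    -- vertices of T₀ ∖ T₁ with no in-neighbor in Bh that are not out-neighbors of r
    let Wl : Set V := {t ∈ T₀ \ T₁ | (∀ b ∈ Bh, ¬ A b t) ∧ ¬ A r t}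
    Wl.ncard > d_b * (k - Y.ncard) →
      ¬ ∃ S : Set V, Y ⊆ S ∧ S ⊆ (T ∪ {r})ᶜ ∧ S.ncard ≤ k ∧
          ∀ t ∈ T, reachIn A (S ∪ T ∪ {r}) r t :=
  stmt_4_general A r T hT k d_b Y
end

section
/- Let d be a natural number and let G be a finite d-degenerate simple graph. Let B and W be disjoint sets of vertices of G with W nonempty, such that every vertex of B has at least d+1 neighbors in W. Then there exists a vertex w ∈ W having at most d neighbors in B∪W. -/
theorem stmt_5 {V : Type*} [Fintype V] (G : SimpleGraph V) (d : ℕ)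
    -- G is d-degenerate: every nonempty induced subgraph has a vertex of degree ≤ d in it
    (hdeg : ∀ X : Set V, X.Nonempty → ∃ v ∈ X, {u ∈ X | G.Adj v u}.ncard ≤ d)
    (B W : Set V) (hdisj : Disjoint B W) (hWne : W.Nonempty)
    (hB : ∀ b ∈ B, d + 1 ≤ {w ∈ W | G.Adj b w}.ncard) :
    ∃ w ∈ W, {u ∈ B ∪ W | G.Adj w u}.ncard ≤ d := by
  obtain ⟨v, hv, hvd⟩ := hdeg (B ∪ W) (hWne.mono Set.subset_union_right)
  cases hv with
  | inl hvB =>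
    exfalso
    have hsub : {w ∈ W | G.Adj v w} ⊆ {u ∈ B ∪ W | G.Adj v u} := by
      intro u hu; exact ⟨Or.inr hu.1, hu.2⟩
    have := (hB v hvB).trans (Set.ncard_le_ncard hsub (Set.toFinite _))
    omega
  | inr hvW => exact ⟨v, hvW, hvd⟩
end

section
/- Let G be a finite simple graph with vertex set V, let k be a natural number and d ≥ 1 an integer, and let Y ⊆ V with |Y| ≤ k. Let B be the set of vertices not in Y that have a neighbor in Y, W = V∖(Y∪B), B_h the set of vertices of B having at least d+1 neighbors in W, and W_l the set of vertices of W having no neighbor in B_h∪W. If |W_l| > d·(k−|Y|), then G has no dominating set S with Y ⊆ S and |S| ≤ k. -/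
theorem stmt_9 {V : Type*} [Fintype V] (G : SimpleGraph V) (k d : ℕ) (hd : 1 ≤ d)
    (Y : Set V) (hYk : Y.ncard ≤ k) :
    -- vertices not in Y having a neighbor in Y
    let B : Set V := {v | v ∉ Y ∧ ∃ y ∈ Y, G.Adj v y}
    -- vertices not dominated by Y
    let W : Set V := (Y ∪ B)ᶜ
    -- vertices of B with at least d + 1 neighbors in W
    let Bh : Set V := {v ∈ B | d + 1 ≤ {w ∈ W | G.Adj v w}.ncard}
    -- vertices of W with no neighbor in Bh ∪ W
    let Wl : Set V := {w ∈ W | ∀ u ∈ Bh ∪ W, ¬ G.Adj w u}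
    Wl.ncard > d * (k - Y.ncard) →
      ¬ ∃ S : Set V, Y ⊆ S ∧ S.ncard ≤ k ∧
          ∀ v : V, v ∈ S ∨ ∃ u ∈ S, G.Adj v u := by
  intro B W Bh Wl hbig
  rintro ⟨S, hYS, hSk, hdom⟩
  classical
  -- every vertex of Wl is dominated by a vertex of S \ Y which is either itself
  -- or an adjacent vertex in B \ Bh
  have key : ∀ w ∈ Wl, ∃ s, s ∈ S ∧ s ∉ Y ∧
      (s = w ∨ (G.Adj w s ∧ s ∈ B ∧ s ∉ Bh)) := by
    intro w hw
    obtain ⟨hwW, hwl⟩ := hw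
    have hwY : w ∉ Y := fun h => hwW (Or.inl h)
    have hwB : w ∉ B := fun h => hwW (Or.inr h)
    rcases hdom w with hwS | ⟨u, huS, hadj⟩
    · exact ⟨w, hwS, hwY, Or.inl rfl⟩
    · have huY : u ∉ Y := fun h => hwB ⟨hwY, u, h, hadj⟩
      have huW : u ∉ W := fun h => hwl u (Or.inr h) hadj
      have huB : u ∈ B := by
        by_contra h
        exact huW (fun hc => hc.elim huY h)
      have huBh : u ∉ Bh := fun h => hwl u (Or.inl h) hadj
      exact ⟨u, huS, huY, Or.inr ⟨hadj, huB, huBh⟩⟩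
  choose f hfS hfY hfspec using key
  set g : V → V := fun w => if h : w ∈ Wl then f w h else w with hg
  have hgeq : ∀ w (h : w ∈ Wl), g w = f w h := fun w h => dif_pos h
  have hWlfin : Wl.Finite := Set.toFinite _
  have hSYfin : (S \ Y).Finite := Set.toFinite _
  -- counting bound
  have hcount : hWlfin.toFinset.card ≤ d * hSYfin.toFinset.card := by
    apply Finset.card_le_mul_card_image_of_maps_to (f := g)
    · intro w hw
      rw [Set.Finite.mem_toFinset] at hw
      rw [Set.Finite.mem_toFinset]
      rw [hgeq w hw]
      exact ⟨hfS w hw, hfY w hw⟩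
    · intro s _
      by_cases hsW : s ∈ W
      · -- fiber is contained in {s}
        have : hWlfin.toFinset.filter (fun w => g w = s) ⊆ {s} := by
          intro w hw
          rw [Finset.mem_filter, Set.Finite.mem_toFinset] at hw
          obtain ⟨hwWl, hgw⟩ := hw
          rw [hgeq w hwWl] at hgw
          rcases hfspec w hwWl with heq | ⟨hadj, _, _⟩
          · exact Finset.mem_singleton.2 (heq.symm.trans hgw)
          · exact absurd (hgw ▸ hadj) (hwWl.2 s (Or.inr hsW))
        calc (hWlfin.toFinset.filter (fun w => g w = s)).card
            ≤ ({s} : Finset V).card := Finset.card_le_card this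
          _ = 1 := Finset.card_singleton s
          _ ≤ d := hd
      · -- fiber is contained in the neighbors of s in W
        rcases Finset.eq_empty_or_nonempty
            (hWlfin.toFinset.filter (fun w => g w = s)) with hemp | ⟨w₀, hw₀⟩
        · rw [hemp]; simp
        · -- get that s ∈ B \ Bh from the witness
          rw [Finset.mem_filter, Set.Finite.mem_toFinset] at hw₀
          obtain ⟨hw₀Wl, hgw₀⟩ := hw₀
          rw [hgeq w₀ hw₀Wl] at hgw₀
          rcases hfspec w₀ hw₀Wl with heq | ⟨_, hsB, hsBh⟩
          · exact absurd (by rw [show s = w₀ from hgw₀.symm.trans heq]; exact hw₀Wl.1) hsW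
          · rw [hgw₀] at hsB hsBh
            have hNfin : {w ∈ W | G.Adj s w}.Finite := Set.toFinite _
            have hsub : hWlfin.toFinset.filter (fun w => g w = s) ⊆ hNfin.toFinset := by
              intro w hw
              rw [Finset.mem_filter, Set.Finite.mem_toFinset] at hw
              obtain ⟨hwWl, hgw⟩ := hw
              rw [hgeq w hwWl] at hgw
              rcases hfspec w hwWl with heq | ⟨hadj, _, _⟩
              · exact absurd (by rw [show s = w from hgw.symm.trans heq]; exact hwWl.1) hsW
              · rw [Set.Finite.mem_toFinset]
                exact ⟨hwWl.1, (hgw ▸ hadj).symm⟩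
            have hNcard : hNfin.toFinset.card ≤ d := by
              have h1 : ¬ (d + 1 ≤ {w ∈ W | G.Adj s w}.ncard) :=
                fun h => hsBh ⟨hsB, h⟩
              rw [not_le, Set.ncard_eq_toFinset_card _ hNfin] at h1
              omega
            exact le_trans (Finset.card_le_card hsub) hNcard
  rw [← Set.ncard_eq_toFinset_card _ hWlfin, ← Set.ncard_eq_toFinset_card _ hSYfin]
      at hcount
  have hdiff : (S \ Y).ncard = S.ncard - Y.ncard :=
    Set.ncard_diff hYS (Set.toFinite _)
  have : d * (S \ Y).ncard ≤ d * (k - Y.ncard) := by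
    apply Nat.mul_le_mul_left
    rw [hdiff]
    omega
  omega
end

section
/- Let U be a finite set, F₁,…,F_m subsets of U, and k a natural number. Let D be the digraph on the disjoint union {r} ⊎ {f₁,…,f_m} ⊎ U whose arcs are (r, f_i) for every i ∈ {1,…,m} and (f_j, u) for every j ∈ {1,…,m} and every u ∈ F_j. Then there exists a set I ⊆ {1,…,m} with |I| ≤ k and ⋃_{i∈I} F_i = U if and only if there exists a set S ⊆ {f₁,…,f_m} with |S| ≤ k such that every u ∈ U is reachable from r by a directed path in the subdigraph of D induced by {r}∪S∪U. -/
/-- Arcs of the digraph built from a Set Cover instance: `r = Sum.inl ()`,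
    set-vertices `f_i = Sum.inr (Sum.inl i)`, element-vertices `Sum.inr (Sum.inr u)`.
    There is an arc from `r` to every `f_i` and from `f_j` to `u` whenever `u ∈ F j`. -/
def scArc {U : Type*} (m : ℕ) (F : Fin m → Set U) :
    (Unit ⊕ Fin m ⊕ U) → (Unit ⊕ Fin m ⊕ U) → Prop
  | Sum.inl _, Sum.inr (Sum.inl _) => True
  | Sum.inr (Sum.inl j), Sum.inr (Sum.inr u) => u ∈ F j
  | _, _ => False

theorem stmt_11 {U : Type*} [Fintype U] (m k : ℕ) (F : Fin m → Set U) :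
    (∃ I : Finset (Fin m), I.card ≤ k ∧ ∀ u : U, ∃ i ∈ I, u ∈ F i) ↔
    (∃ S : Set (Fin m), S.Finite ∧ S.ncard ≤ k ∧
      ∀ u : U, reachIn (scArc m F)
        ({(Sum.inl () : Unit ⊕ Fin m ⊕ U)} ∪
          (fun i => (Sum.inr (Sum.inl i) : Unit ⊕ Fin m ⊕ U)) '' S ∪
          Set.range (fun u : U => (Sum.inr (Sum.inr u) : Unit ⊕ Fin m ⊕ U)))
        (Sum.inl ()) (Sum.inr (Sum.inr u))) := by
  constructor
  · rintro ⟨I, hIcard, hIcov⟩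
    refine ⟨↑I, I.finite_toSet, by simpa using hIcard, fun u => ?_⟩
    obtain ⟨i, hiI, hiF⟩ := hIcov u
    refine Relation.ReflTransGen.head (b := Sum.inr (Sum.inl i)) ?_ (Relation.ReflTransGen.single ?_)
    · exact ⟨Or.inl (Or.inl rfl), Or.inl (Or.inr ⟨i, hiI, rfl⟩), trivial⟩
    · exact ⟨Or.inl (Or.inr ⟨i, hiI, rfl⟩), Or.inr ⟨u, rfl⟩, hiF⟩
  · rintro ⟨S, hSfin, hScard, hreach⟩
    refine ⟨hSfin.toFinset, by rwa [Set.ncard_eq_toFinset_card S hSfin] at hScard, fun u => ?_⟩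
    have h := hreach u
    rcases (Relation.ReflTransGen.cases_tail h) with heq | ⟨b, _, hbX, _, harc⟩
    · exact absurd heq (by simp)
    · match b, harc with
      | Sum.inr (Sum.inl j), harc =>
        refine ⟨j, ?_, harc⟩
        rcases hbX with (h | ⟨i, hiS, hi⟩) | ⟨v, hv⟩
        · simp at h
        · simp only [Sum.inr.injEq, Sum.inl.injEq] at hi
          subst hi; simpa using hiS
        · simp at hv
end
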